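/- arXiv:2007.04593 — 3 statements merged into one kernel-verified Lean document; each statement's English description precedes it below -/
import Mathlib

section
/- Let t > 0 and ξ₀ ∈ ℝⁿ. If the function ξ ↦ ⟨ξ₀, ξ⟩ e^{−t a_t(ξ)} is bounded on ℝⁿ, then ξ₀ belongs to S^⊥, the Euclidean orthogonal complement of S. (This is the Fourier-multiplier form of the statement that boundedness on L²(ℝⁿ) of ⟨ξ₀,∇_x⟩ e^{−tP} forces ξ₀ ∈ S^⊥, where e^{−tP} = e^{−t a_t(D_x)} e^{−t⟨Bx,∇_x⟩} and the transport factor is an invertible similitude of L².) -/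
open Matrix MeasureTheory

/-- The canonical Euclidean norm on `ℝⁿ`. -/
noncomputable def euclNorm {n : ℕ} (v : Fin n → ℝ) : ℝ := Real.sqrt (∑ i, v i ^ 2)

/-- The canonical Euclidean scalar product on `ℝⁿ`. -/
def euclInner {n : ℕ} (u v : Fin n → ℝ) : ℝ := ∑ i, u i * v i

/-- Membership in `S = ⋂_{j=0}^{n-1} Ker(√Q (Bᵀ)^j)`, where `sq` stands for `√Q`. -/
def memS (n : ℕ) (B sq : Matrix (Fin n) (Fin n) ℝ) (η : Fin n → ℝ) : Prop :=
  ∀ j < n, (sq * Bᵀ ^ j).mulVec η = 0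

/-- Membership in `S^⊥`, the Euclidean orthogonal complement of `S`. -/
def memSperp (n : ℕ) (B sq : Matrix (Fin n) (Fin n) ℝ) (ξ₀ : Fin n → ℝ) : Prop :=
  ∀ η : Fin n → ℝ, memS n B sq η → euclInner ξ₀ η = 0

/-- Membership in `V_k^⊥`, where `V_k = ⋂_{j=0}^{k} Ker(√Q (Bᵀ)^j)`. -/
def memVperp (n : ℕ) (B sq : Matrix (Fin n) (Fin n) ℝ) (k : ℕ) (ξ₀ : Fin n → ℝ) : Prop :=
  ∀ η : Fin n → ℝ, (∀ j ≤ k, (sq * Bᵀ ^ j).mulVec η = 0) → euclInner ξ₀ η = 0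

/-- The index `k_{ξ₀} = min {0 ≤ k ≤ r : ξ₀ ∈ V_k^⊥}` of a vector `ξ₀ ∈ S^⊥`. -/
noncomputable def kIndex (n : ℕ) (B sq : Matrix (Fin n) (Fin n) ℝ) (r : ℕ)
    (ξ₀ : Fin n → ℝ) : ℕ :=
  sInf {k | k ≤ r ∧ memVperp n B sq k ξ₀}

/-- `r` is the smallest integer such that `S = ⋂_{j=0}^{r} Ker(√Q (Bᵀ)^j)`. -/
def IsSmallestr (n : ℕ) (B sq : Matrix (Fin n) (Fin n) ℝ) (r : ℕ) : Prop :=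
  IsLeast {k | ∀ η : Fin n → ℝ,
    (∀ j ≤ k, (sq * Bᵀ ^ j).mulVec η = 0) ↔ memS n B sq η} r

open scoped ComplexOrder in
/-- The positive semidefinite square root of a positive semidefinite matrix
(the definition `Matrix.PosSemidef.sqrt` of the older Mathlib, removed since). -/
noncomputable def Matrix.PosSemidef.sqrt {n 𝕜 : Type*} [RCLike 𝕜] [Fintype n] [DecidableEq n]
    {A : Matrix n n 𝕜} (hA : A.PosSemidef) : Matrix n n 𝕜 :=
  hA.1.eigenvectorUnitary.1 * diagonal ((↑) ∘ (√·) ∘ hA.1.eigenvalues) *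
  (star hA.1.eigenvectorUnitary : Matrix n n 𝕜)

/-- The symbol `a_t(ξ) = (1/2) ∫₀¹ |√Q e^{α t Bᵀ} ξ|^{2s} dα`. -/
noncomputable def symb (n : ℕ) (B sq : Matrix (Fin n) (Fin n) ℝ) (s t : ℝ)
    (ξ : Fin n → ℝ) : ℝ :=
  (1 / 2) * ∫ α in (0:ℝ)..1, euclNorm ((sq * NormedSpace.exp ((α * t) • Bᵀ)).mulVec ξ) ^ (2 * s)

/-!
For `η ∈ S`, Cayley–Hamilton gives `√Q (Bᵀ)^k η = 0` for every `k`, hence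
`√Q e^{αtBᵀ} η = 0`, so the symbol `a_t` is invariant under translation by `S`. On the line
`ℝη` the function `⟨ξ₀, ξ⟩ e^{−t a_t(ξ)}` is therefore `l ↦ l ⟨ξ₀, η⟩ e^{−t a_t(0)}`, which is
bounded only if `⟨ξ₀, η⟩ = 0`.
-/

theorem eq_zero_of_forall_mul_le {K : Type*} [Field K] [LinearOrder K] [IsStrictOrderedRing K]
    {a C : K} (h : ∀ l : K, l * a ≤ C) : a = 0 := by
  by_contra ha
  have := h ((|C| + 1) / a)
  rw [div_mul_cancel₀ _ ha] at this
  linarith [le_abs_self C]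

theorem Matrix.map_pow_eq_zero_of_forall_lt_card {ι R V : Type*} [Fintype ι] [DecidableEq ι]
    [CommRing R] [Nontrivial R] [AddCommGroup V] [Module R V]
    (L : Matrix ι ι R →ₗ[R] V) (M : Matrix ι ι R)
    (h : ∀ j < Fintype.card ι, L (M ^ j) = 0) (k : ℕ) : L (M ^ k) = 0 := by
  rcases (Fintype.card ι).eq_zero_or_pos with hι | hι
  · have : IsEmpty ι := Fintype.card_eq_zero_iff.mp hι
    rw [Subsingleton.elim (M ^ k) 0, map_zero]
  have hχ : M.charpoly ≠ 1 := fun h1 => by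
    have := M.charpoly_natDegree_eq_dim
    rw [h1, Polynomial.natDegree_one] at this
    omega
  have hdeg : (Polynomial.X ^ k %ₘ M.charpoly).natDegree < Fintype.card ι :=
    M.charpoly_natDegree_eq_dim ▸ Polynomial.natDegree_modByMonic_lt _ M.charpoly_monic hχ
  rw [pow_eq_aeval_mod_charpoly, Polynomial.aeval_eq_sum_range' hdeg, map_sum]
  exact Finset.sum_eq_zero fun j hj => by
    rw [map_smul, h j (Finset.mem_range.mp hj), smul_zero]

theorem NormedSpace.map_exp_eq_zero_of_forall_map_pow_eq_zero {𝕂 𝔸 V : Type*} [RCLike 𝕂]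
    [NormedRing 𝔸] [NormedAlgebra 𝕂 𝔸] [CompleteSpace 𝔸] [AddCommGroup V] [Module 𝕂 V]
    [TopologicalSpace V] [IsTopologicalAddGroup V] [T2Space V]
    (L : 𝔸 →L[𝕂] V) {x : 𝔸} (h : ∀ k, L (x ^ k) = 0) : L (NormedSpace.exp x) = 0 := by
  have hsum := (NormedSpace.exp_series_hasSum_exp' (𝕂 := 𝕂) x).mapL L
  simp only [map_smul, h, smul_zero] at hsum
  exact hsum.unique hasSum_zero

theorem Matrix.mul_exp_mulVec_eq_zero {ι κ : Type*} [Fintype ι] [DecidableEq ι]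
    (A : Matrix κ ι ℝ) (M : Matrix ι ι ℝ) (v : ι → ℝ)
    (h : ∀ j < Fintype.card ι, (A * M ^ j) *ᵥ v = 0) : (A * NormedSpace.exp M) *ᵥ v = 0 := by
  let _ : NormedRing (Matrix ι ι ℝ) := Matrix.linftyOpNormedRing
  let _ : NormedAlgebra ℝ (Matrix ι ι ℝ) := Matrix.linftyOpNormedAlgebra
  let L : Matrix ι ι ℝ →ₗ[ℝ] κ → ℝ := A.mulVecLin ∘ₗ (mulVecBilin ℝ ℝ).flip v
  have hL : ∀ N, L N = (A * N) *ᵥ v := fun N => mulVec_mulVec v A N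
  rw [← hL]
  exact NormedSpace.map_exp_eq_zero_of_forall_map_pow_eq_zero (𝕂 := ℝ)
    (LinearMap.toContinuousLinearMap L)
    (Matrix.map_pow_eq_zero_of_forall_lt_card L M fun j hj => (hL _).trans (h j hj))

theorem memS.smul {n : ℕ} {B sq : Matrix (Fin n) (Fin n) ℝ} {η : Fin n → ℝ}
    (hη : memS n B sq η) (l : ℝ) : memS n B sq (l • η) := fun j hj => by
  rw [mulVec_smul, hη j hj, smul_zero]

theorem memS.mul_exp_mulVec_eq_zero {n : ℕ} {B sq : Matrix (Fin n) (Fin n) ℝ} {η : Fin n → ℝ}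
    (hη : memS n B sq η) (c : ℝ) : (sq * NormedSpace.exp (c • Bᵀ)) *ᵥ η = 0 :=
  sq.mul_exp_mulVec_eq_zero _ η fun j hj => by
    rw [smul_pow, mul_smul_comm, smul_mulVec, hη j (by simpa using hj), smul_zero]

theorem symb_add_of_memS {n : ℕ} {B sq : Matrix (Fin n) (Fin n) ℝ} {η : Fin n → ℝ}
    (hη : memS n B sq η) (s t : ℝ) (ξ : Fin n → ℝ) :
    symb n B sq s t (ξ + η) = symb n B sq s t ξ := by
  simp only [symb, mulVec_add, hη.mul_exp_mulVec_eq_zero, add_zero]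

theorem euclInner_smul_right {n : ℕ} (u v : Fin n → ℝ) (l : ℝ) :
    euclInner u (l • v) = l * euclInner u v := by
  simp only [euclInner, Finset.mul_sum, Pi.smul_apply, smul_eq_mul, mul_left_comm]

theorem statement4_general (n : ℕ) (s : ℝ)
    (B Q : Matrix (Fin n) (Fin n) ℝ) (hQ : Q.PosSemidef)
    (t : ℝ) (ξ₀ : Fin n → ℝ)
    (hbdd : ∃ C : ℝ, ∀ ξ : Fin n → ℝ,
      |euclInner ξ₀ ξ| * Real.exp (-(t * symb n B hQ.sqrt s t ξ)) ≤ C) :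
    memSperp n B hQ.sqrt ξ₀ := by
  obtain ⟨C, hC⟩ := hbdd
  intro η hη
  set e := Real.exp (-(t * symb n B hQ.sqrt s t 0))
  have hline : ∀ l : ℝ, l * (euclInner ξ₀ η * e) ≤ C := fun l => calc
    l * (euclInner ξ₀ η * e) = euclInner ξ₀ (l • η) * e := by
      rw [euclInner_smul_right, mul_assoc]
    _ ≤ |euclInner ξ₀ (l • η)| * e := by gcongr; exact le_abs_self _
    _ = |euclInner ξ₀ (l • η)| * Real.exp (-(t * symb n B hQ.sqrt s t (l • η))) := by
      rw [← zero_add (l • η), symb_add_of_memS (hη.smul l)]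
    _ ≤ C := hC _
  exact (mul_eq_zero.mp (eq_zero_of_forall_mul_le hline)).resolve_right (Real.exp_pos _).ne'

/-- If the function `ξ ↦ ⟨ξ₀, ξ⟩ e^{−t a_t(ξ)}` is bounded on `ℝⁿ` for some `t > 0`,
then `ξ₀ ∈ S^⊥`. -/
theorem statement4 (n : ℕ) (hn : 1 ≤ n) (s : ℝ) (hs : 0 < s)
    (B Q : Matrix (Fin n) (Fin n) ℝ) (hQ : Q.PosSemidef)
    (t : ℝ) (ht : 0 < t) (ξ₀ : Fin n → ℝ)
    (hbdd : ∃ C : ℝ, ∀ ξ : Fin n → ℝ,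
      |euclInner ξ₀ ξ| * Real.exp (-(t * symb n B hQ.sqrt s t ξ)) ≤ C) :
    memSperp n B hQ.sqrt ξ₀ :=
  statement4_general n s B Q hQ t ξ₀ hbdd
end

section
/- For every real s > 0 there exists a constant c > 1 such that for all multi-indices α, β ∈ ℕⁿ, every t > 0 and every (ξ, η) ∈ ℝⁿ×ℝⁿ, (∏_{i=1}^n |ξ_i|^{α_i}) (∏_{i=1}^n |η_i|^{β_i}) · exp(−t ∫₀¹ |η + θ t ξ|^{2s} dθ) ≤ c^{|α|+|β|} · t^{−(1+1/(2s))|α| − |β|/(2s)} · (α!)^{1/(2s)} (β!)^{1/(2s)}. (This is the pointwise symbol form of the smoothing estimate ‖∂_x^α ∂_v^β e^{−tK} u‖_{L²(ℝ^{2n})} ≤ c^{|α|+|β|} t^{−(1+1/(2s))|α| − |β|/(2s)} (α!)^{1/(2s)} (β!)^{1/(2s)} ‖u‖_{L²} for the semigroup generated by the fractional Kolmogorov operator K = (−Δ_v)^s + v·∇_x on ℝ^{2n}.) -/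
open Matrix MeasureTheory

/-! For `θ ∈ [0, 1/4]`, the points `u + θ w` and `u + (θ + 3/4) w` are `(3/4) ‖w‖` apart and the
first is within `‖w‖ / 4` of `u`, so the larger of their norms is at least `max ‖u‖ ‖w‖ / 3`;
pairing the two ends of `[0, 1]` gives
`∫₀¹ ‖η + θ t ξ‖^{2s} dθ ≳ ‖η‖^{2s} + t^{2s} ‖ξ‖^{2s}`. The exponential then splits over the
coordinates, and each one-dimensional factor `y^a e^{-μ y^p}` is, after the substitution
`z = p μ y^p`, controlled by `z^a e^{-z} ≤ a!`: this is where `(α!)^{1/(2s)}` comes from. -/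

open Real

lemma norm_rpow_add_norm_rpow_le {E : Type*} [SeminormedAddCommGroup E] [NormedSpace ℝ E]
    {p θ : ℝ} (hp : 0 ≤ p) (u w : E) (hθ₀ : 0 ≤ θ) (hθ₁ : θ ≤ 1 / 4) :
    (‖u‖ ^ p + ‖w‖ ^ p) / (2 * 3 ^ p) ≤ ‖u + θ • w‖ ^ p + ‖u + (θ + 3 / 4) • w‖ ^ p := by
  set a := ‖u + θ • w‖
  set b := ‖u + (θ + 3 / 4) • w‖
  have hw : 3 / 4 * ‖w‖ ≤ a + b := by
    have h := norm_sub_le (u + (θ + 3 / 4) • w) (u + θ • w)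
    rwa [add_sub_add_left_eq_sub, ← sub_smul, add_sub_cancel_left, norm_smul, Real.norm_of_nonneg
      (by norm_num), add_comm b] at h
  have hu : ‖u‖ ≤ a + θ * ‖w‖ := by
    have h := norm_sub_le (u + θ • w) (θ • w)
    rwa [add_sub_cancel_right, norm_smul, Real.norm_of_nonneg hθ₀] at h
  have ha₀ : 0 ≤ a := norm_nonneg _
  have hb₀ : 0 ≤ b := norm_nonneg _
  set M := max a b with hM_def
  have ha : a ≤ M := le_max_left a b
  have hb : b ≤ M := le_max_right a b
  have hθw : θ * ‖w‖ ≤ 1 / 4 * ‖w‖ := mul_le_mul_of_nonneg_right hθ₁ (norm_nonneg w)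
  have hu₃ : ‖u‖ ≤ 3 * M := by linarith
  have hw₃ : ‖w‖ ≤ 3 * M := by linarith
  have hM : M ^ p ≤ a ^ p + b ^ p := by
    rcases max_choice a b with h | h <;> rw [hM_def, h] <;>
      linarith [rpow_nonneg ha₀ p, rpow_nonneg hb₀ p]
  calc (‖u‖ ^ p + ‖w‖ ^ p) / (2 * 3 ^ p) ≤ ((3 * M) ^ p + (3 * M) ^ p) / (2 * 3 ^ p) := by
        gcongr
    _ = M ^ p := by
        rw [mul_rpow (by norm_num) (by positivity)]
        field_simp
        ring
    _ ≤ a ^ p + b ^ p := hM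

lemma integral_add_comp_add_le_integral {f : ℝ → ℝ} (hf : Continuous f) (hf₀ : ∀ x, 0 ≤ f x)
    {a b h : ℝ} (hbh : b ≤ a + h) :
    ∫ x in a..b, (f x + f (x + h)) ≤ ∫ x in a..b + h, f x := by
  have hf_shift : Continuous fun x => f (x + h) := hf.comp (continuous_add_const h)
  rw [intervalIntegral.integral_add (hf.intervalIntegrable _ _) (hf_shift.intervalIntegrable _ _),
    intervalIntegral.integral_comp_add_right f h,
    ← intervalIntegral.integral_add_adjacent_intervals (hf.intervalIntegrable a b)
      (hf.intervalIntegrable b (b + h)),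
    ← intervalIntegral.integral_add_adjacent_intervals (hf.intervalIntegrable b (a + h))
      (hf.intervalIntegrable (a + h) (b + h))]
  have hmid : 0 ≤ ∫ x in b..a + h, f x := intervalIntegral.integral_nonneg hbh fun x _ => hf₀ x
  linarith

lemma integral_norm_add_smul_rpow_ge {E : Type*} [SeminormedAddCommGroup E] [NormedSpace ℝ E]
    {p : ℝ} (hp : 0 ≤ p) (u w : E) :
    (‖u‖ ^ p + ‖w‖ ^ p) / (8 * 3 ^ p) ≤ ∫ θ in (0 : ℝ)..1, ‖u + θ • w‖ ^ p := by
  set f : ℝ → ℝ := fun θ => ‖u + θ • w‖ ^ p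
  have hf : Continuous f := (continuous_rpow_const hp).comp (by fun_prop)
  have hshift := integral_add_comp_add_le_integral hf (fun θ => rpow_nonneg (norm_nonneg _) p)
    (a := 0) (b := 1 / 4) (h := 3 / 4) (by norm_num)
  norm_num at hshift
  calc (‖u‖ ^ p + ‖w‖ ^ p) / (8 * 3 ^ p)
      = ∫ _ in (0 : ℝ)..1 / 4, (‖u‖ ^ p + ‖w‖ ^ p) / (2 * 3 ^ p) := by
        rw [intervalIntegral.integral_const, smul_eq_mul]
        ring
    _ ≤ ∫ θ in (0 : ℝ)..1 / 4, (f θ + f (θ + 3 / 4)) :=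
        intervalIntegral.integral_mono_on (by norm_num) intervalIntegrable_const
          ((hf.add (hf.comp (continuous_add_const _))).intervalIntegrable _ _)
          fun θ hθ => norm_rpow_add_norm_rpow_le hp u w hθ.1 hθ.2
    _ ≤ ∫ θ in (0 : ℝ)..1, f θ := hshift

lemma exp_neg_mul_integral_norm_add_smul_rpow_le {E : Type*} [SeminormedAddCommGroup E]
    [NormedSpace ℝ E] {p t : ℝ} (hp : 0 ≤ p) (ht : 0 < t) (u w : E) :
    exp (-(t * ∫ θ in (0 : ℝ)..1, ‖u + (θ * t) • w‖ ^ p)) ≤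
      exp (-((8 * 3 ^ p)⁻¹ * t ^ (1 + p) * ‖w‖ ^ p)) * exp (-((8 * 3 ^ p)⁻¹ * t * ‖u‖ ^ p)) := by
  have h := integral_norm_add_smul_rpow_ge hp u (t • w)
  simp_rw [smul_smul, norm_smul, Real.norm_of_nonneg ht.le, mul_rpow ht.le (norm_nonneg _)] at h
  rw [div_eq_inv_mul] at h
  rw [← exp_add, exp_le_exp, rpow_add ht, rpow_one]
  linear_combination t * h


lemma pow_mul_exp_neg_le_factorial {z : ℝ} (hz : 0 ≤ z) (a : ℕ) :
    z ^ a * exp (-z) ≤ a.factorial := by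
  have h := pow_div_factorial_le_exp z hz a
  rw [div_le_iff₀ (by positivity), mul_comm] at h
  rw [exp_neg, ← div_eq_mul_inv, div_le_iff₀ (exp_pos z)]
  exact h

lemma pow_mul_exp_neg_mul_rpow_le {p μ y : ℝ} (hp : 0 < p) (hμ : 0 < μ) (hy : 0 ≤ y) (a : ℕ) :
    y ^ a * exp (-(μ * y ^ p)) ≤ (p * μ) ^ (-(a / p)) * (a.factorial : ℝ) ^ (1 / p) := by
  have hpμ : 0 < p * μ := mul_pos hp hμ
  set z := p * μ * y ^ p
  have hpow : (z ^ a) ^ (1 / p) = (p * μ) ^ (a / p) * y ^ a := by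
    rw [← rpow_natCast, mul_rpow hpμ.le (by positivity), mul_rpow (by positivity) (by positivity),
      ← rpow_mul hpμ.le, ← rpow_mul (by positivity), ← rpow_mul hy, ← rpow_natCast]
    field_simp
  have hexp : exp (-z) ^ (1 / p) = exp (-(μ * y ^ p)) := by
    rw [← exp_mul, neg_mul, mul_one_div, mul_div_right_comm, mul_div_cancel_left₀ _ hp.ne']
  have hrescale :
      y ^ a * exp (-(μ * y ^ p)) = (p * μ) ^ (-(a / p)) * (z ^ a * exp (-z)) ^ (1 / p) := by
    rw [mul_rpow (by positivity) (exp_pos _).le, hpow, hexp, ← mul_assoc, ← mul_assoc,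
      ← rpow_add hpμ, neg_add_cancel, rpow_zero, one_mul]
  rw [hrescale]
  gcongr
  exact pow_mul_exp_neg_le_factorial (by positivity) a

lemma exp_neg_mul_norm_rpow_le_prod {ι : Type*} [Fintype ι] [Nonempty ι] {p ν : ℝ} (hp : 0 ≤ p)
    (hν : 0 ≤ ν) (x : EuclideanSpace ℝ ι) :
    exp (-(ν * ‖x‖ ^ p)) ≤ ∏ i, exp (-(ν / Fintype.card ι * |x i| ^ p)) := by
  rw [← exp_sum, exp_le_exp, Finset.sum_neg_distrib, neg_le_neg_iff]
  calc ∑ i, ν / Fintype.card ι * |x i| ^ p ≤ ∑ _i : ι, ν / Fintype.card ι * ‖x‖ ^ p := by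
        gcongr with i
        exact PiLp.norm_apply_le x i
    _ = ν * ‖x‖ ^ p := by
        rw [Finset.sum_const, Finset.card_univ, nsmul_eq_mul]
        field_simp

lemma prod_abs_pow_mul_exp_neg_mul_norm_rpow_le {ι : Type*} [Fintype ι] [Nonempty ι] {p ν : ℝ}
    (hp : 0 < p) (hν : 0 < ν) (α : ι → ℕ) (x : EuclideanSpace ℝ ι) :
    (∏ i, |x i| ^ α i) * exp (-(ν * ‖x‖ ^ p)) ≤
      (p * (ν / Fintype.card ι)) ^ (-((∑ i, α i : ℕ) / p)) *
        (∏ i, ((α i).factorial : ℝ)) ^ (1 / p) := by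
  have hμ : 0 < ν / Fintype.card ι := div_pos hν (by exact_mod_cast Fintype.card_pos)
  calc (∏ i, |x i| ^ α i) * exp (-(ν * ‖x‖ ^ p))
      ≤ ∏ i, |x i| ^ α i * exp (-(ν / Fintype.card ι * |x i| ^ p)) := by
        rw [Finset.prod_mul_distrib]
        gcongr
        exact exp_neg_mul_norm_rpow_le_prod hp.le hν.le x
    _ ≤ ∏ i, (p * (ν / Fintype.card ι)) ^ (-(α i / p)) * ((α i).factorial : ℝ) ^ (1 / p) := by
        refine Finset.prod_le_prod (fun i _ => by positivity) fun i _ => ?_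
        exact pow_mul_exp_neg_mul_rpow_le hp hμ (abs_nonneg _) (α i)
    _ = _ := by
        rw [Finset.prod_mul_distrib, ← rpow_sum_of_pos (by positivity),
          Real.finsetProd_rpow _ _ (fun i _ => by positivity)]
        push_cast
        rw [Finset.sum_div, ← Finset.sum_neg_distrib]

lemma prod_abs_pow_mul_exp_neg_mul_mul_norm_rpow_le {ι : Type*} [Fintype ι] [Nonempty ι]
    {p κ τ : ℝ} (hp : 0 < p) (hκ : 0 < κ) (hτ : 0 < τ) (α : ι → ℕ) (x : EuclideanSpace ℝ ι) :
    (∏ i, |x i| ^ α i) * exp (-(κ * τ * ‖x‖ ^ p)) ≤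
      ((p * (κ / Fintype.card ι)) ^ (-(1 / p))) ^ (∑ i, α i) * τ ^ (-((∑ i, α i : ℕ) / p)) *
        (∏ i, ((α i).factorial : ℝ)) ^ (1 / p) := by
  have hℓ : 0 < p * (κ / Fintype.card ι) := by
    have : (0 : ℝ) < Fintype.card ι := by exact_mod_cast Fintype.card_pos
    positivity
  have h := prod_abs_pow_mul_exp_neg_mul_norm_rpow_le hp (mul_pos hκ hτ) α x
  rw [mul_div_right_comm, ← mul_assoc, mul_rpow hℓ.le hτ.le] at h
  convert h using 3
  rw [← rpow_natCast, ← rpow_mul hℓ.le]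
  ring_nf

noncomputable def smoothingConst (ι : Type*) [Fintype ι] (p : ℝ) : ℝ :=
  (p * ((8 * 3 ^ p)⁻¹ / Fintype.card ι)) ^ (-(1 / p))

lemma smoothingConst_pos (ι : Type*) [Fintype ι] [Nonempty ι] {p : ℝ} (hp : 0 < p) :
    0 < smoothingConst ι p := by
  have : (0 : ℝ) < Fintype.card ι := by exact_mod_cast Fintype.card_pos
  unfold smoothingConst
  positivity

lemma prod_abs_pow_mul_exp_neg_mul_integral_le {ι : Type*} [Fintype ι] [Nonempty ι] {p t : ℝ}
    (hp : 0 < p) (ht : 0 < t) (α β : ι → ℕ) (x y : EuclideanSpace ℝ ι) :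
    (∏ i, |x i| ^ α i) * (∏ i, |y i| ^ β i) *
        exp (-(t * ∫ θ in (0 : ℝ)..1, ‖y + (θ * t) • x‖ ^ p)) ≤
      smoothingConst ι p ^ (∑ i, α i + ∑ i, β i) *
        t ^ (-((1 + 1 / p) * (∑ i, α i : ℕ) + (∑ i, β i : ℕ) / p)) *
        (∏ i, ((α i).factorial : ℝ)) ^ (1 / p) * (∏ i, ((β i).factorial : ℝ)) ^ (1 / p) := by
  set κ : ℝ := (8 * 3 ^ p)⁻¹
  set N := ∑ i, α i
  set M := ∑ i, β i
  have hξ := prod_abs_pow_mul_exp_neg_mul_mul_norm_rpow_le hp (κ := κ) (by positivity)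
    (rpow_pos_of_pos ht (1 + p)) α x
  have hη := prod_abs_pow_mul_exp_neg_mul_mul_norm_rpow_le hp (κ := κ) (by positivity) ht β y
  have ht_pow : (t ^ (1 + p)) ^ (-(N / p)) * t ^ (-(M / p)) =
      t ^ (-((1 + 1 / p) * N + M / p)) := by
    rw [← rpow_mul ht.le, ← rpow_add ht]
    field_simp
    ring_nf
  calc (∏ i, |x i| ^ α i) * (∏ i, |y i| ^ β i) *
        exp (-(t * ∫ θ in (0 : ℝ)..1, ‖y + (θ * t) • x‖ ^ p))
      ≤ ((∏ i, |x i| ^ α i) * exp (-(κ * t ^ (1 + p) * ‖x‖ ^ p))) *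
          ((∏ i, |y i| ^ β i) * exp (-(κ * t * ‖y‖ ^ p))) := by
        rw [mul_mul_mul_comm]
        gcongr
        exact exp_neg_mul_integral_norm_add_smul_rpow_le hp.le ht y x
    _ ≤ (smoothingConst ι p ^ N * (t ^ (1 + p)) ^ (-(N / p)) *
            (∏ i, ((α i).factorial : ℝ)) ^ (1 / p)) *
          (smoothingConst ι p ^ M * t ^ (-(M / p)) * (∏ i, ((β i).factorial : ℝ)) ^ (1 / p)) :=
        mul_le_mul hξ hη (by positivity) (by have := smoothingConst_pos ι hp; positivity)
    _ = _ := by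
        rw [← ht_pow, pow_add]
        ring

lemma euclNorm_eq_norm_toLp {n : ℕ} (v : Fin n → ℝ) :
    euclNorm v = ‖(WithLp.toLp 2 v : EuclideanSpace ℝ (Fin n))‖ := by
  simp [EuclideanSpace.norm_eq, euclNorm]

/-- Pointwise symbol form of the smoothing estimate for the semigroup generated by the
fractional Kolmogorov operator `K = (−Δ_v)^s + v·∇ₓ` on `ℝ^{2n}`. -/
theorem statement10 (n : ℕ) (hn : 1 ≤ n) (s : ℝ) (hs : 0 < s) :
    ∃ c : ℝ, 1 < c ∧
      ∀ α β : Fin n → ℕ, ∀ t : ℝ, 0 < t → ∀ ξ η : Fin n → ℝ,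
        (∏ i, |ξ i| ^ α i) * (∏ i, |η i| ^ β i) *
            Real.exp (-(t * ∫ θ in (0:ℝ)..1, euclNorm (η + (θ * t) • ξ) ^ (2 * s))) ≤
          c ^ (∑ i, α i + ∑ i, β i) *
            t ^ (-((1 + 1 / (2 * s)) * (∑ i, α i : ℕ) + (∑ i, β i : ℕ) / (2 * s))) *
            (∏ i, ((α i).factorial : ℝ)) ^ (1 / (2 * s)) *
            (∏ i, ((β i).factorial : ℝ)) ^ (1 / (2 * s)) := by
  have : Nonempty (Fin n) := ⟨⟨0, hn⟩⟩
  have hp : 0 < 2 * s := by positivity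
  have hC := smoothingConst_pos (Fin n) hp
  refine ⟨smoothingConst (Fin n) (2 * s) + 1, by linarith, fun α β t ht ξ η => ?_⟩
  have h := prod_abs_pow_mul_exp_neg_mul_integral_le hp ht α β (WithLp.toLp 2 ξ) (WithLp.toLp 2 η)
  simp_rw [← WithLp.toLp_smul, ← WithLp.toLp_add, ← euclNorm_eq_norm_toLp] at h
  refine h.trans ?_
  gcongr
  linarith
end

section
/- Assume that B is nilpotent of order K ≥ 1, i.e. B^K = 0 and B^{K−1} ≠ 0. Then there exists a constant c₀ > 0 such that for every t > 0 and every ξ ∈ ℝⁿ, ∫₀¹ |√Q e^{αtBᵀ} ξ|² dα ≥ c₀ Σ_{k=0}^{K−1} t^{2k} |√Q (Bᵀ)^k ξ|². -/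
/-!
Since `Bᵀ` is nilpotent, `e^{αtBᵀ} = ∑_{k<K} (αt)^k/k! (Bᵀ)^k`, so the integrand is
`|∑_{k<K} α^k w_k|²` with `w_k = t^k/k! √Q (Bᵀ)^k ξ`. A nonzero polynomial cannot vanish on all
of `(0, 1)`, so `a ↦ ∫₀¹ (∑ a_k α^k)² dα` is a positive definite quadratic form on `ℝ^K`, and
compactness of the unit sphere bounds it below by `c |a|²`. Applying this coordinatewise to the
`w_k` and absorbing the factorials `k! ≤ K!` into the constant gives the claim.
-/

open Matrix MeasureTheory

open Finset
open scoped Nat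

lemma euclNorm_sq {n : ℕ} (v : Fin n → ℝ) : euclNorm v ^ 2 = ∑ i, v i ^ 2 :=
  Real.sq_sqrt (sum_nonneg fun i _ => sq_nonneg _)

lemma euclNorm_smul_sq {n : ℕ} (r : ℝ) (v : Fin n → ℝ) :
    euclNorm (r • v) ^ 2 = r ^ 2 * euclNorm v ^ 2 := by
  simp only [euclNorm_sq, Pi.smul_apply, smul_eq_mul, mul_pow, mul_sum]

theorem NormedSpace.exp_eq_sum_range_of_pow_eq_zero {𝕂 𝔸 : Type*} [Field 𝕂] [CharZero 𝕂]
    [Ring 𝔸] [Algebra 𝕂 𝔸] [TopologicalSpace 𝔸] [IsTopologicalRing 𝔸] {x : 𝔸} {K : ℕ}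
    (hx : x ^ K = 0) :
    NormedSpace.exp x = ∑ k ∈ range K, (k !⁻¹ : 𝕂) • x ^ k := by
  rw [NormedSpace.exp_eq_tsum 𝕂]
  refine tsum_eq_sum fun k hk => ?_
  rw [pow_eq_zero_of_le (not_lt.mp (mem_range.not.mp hk)) hx, smul_zero]

/-- The constant is the minimum of `f` on the unit sphere. -/
theorem exists_pos_mul_norm_sq_le {E : Type*} [NormedAddCommGroup E] [NormedSpace ℝ E]
    [FiniteDimensional ℝ E] {f : E → ℝ} (hf : Continuous f) (hpos : ∀ x, x ≠ 0 → 0 < f x)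
    (hsmul : ∀ (r : ℝ) (x : E), f (r • x) = r ^ 2 * f x) :
    ∃ c > 0, ∀ x, c * ‖x‖ ^ 2 ≤ f x := by
  have hzero : f 0 = 0 := by simpa using hsmul 0 0
  obtain hE | hE := subsingleton_or_nontrivial E
  · exact ⟨1, one_pos, fun x => by simp [Subsingleton.elim x 0, hzero]⟩
  obtain ⟨x₀, hx₀, hmin⟩ := (isCompact_sphere (0 : E) 1).exists_isMinOn
    (NormedSpace.sphere_nonempty.mpr zero_le_one) hf.continuousOn
  have hx₀ne : x₀ ≠ 0 := ne_zero_of_mem_unit_sphere ⟨x₀, hx₀⟩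
  refine ⟨f x₀, hpos x₀ hx₀ne, fun x => ?_⟩
  rcases eq_or_ne x 0 with rfl | hx
  · simp [hzero]
  have hnorm : ‖x‖ ≠ 0 := norm_ne_zero_iff.mpr hx
  have hunit : ‖x‖⁻¹ • x ∈ Metric.sphere (0 : E) 1 := by
    simp [norm_smul, hnorm]
  calc f x₀ * ‖x‖ ^ 2 ≤ f (‖x‖⁻¹ • x) * ‖x‖ ^ 2 := by gcongr; exact hmin hunit
    _ = f x := by rw [hsmul, mul_comm, ← mul_assoc, ← mul_pow, mul_inv_cancel₀ hnorm, one_pow,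
        one_mul]

open Polynomial in
lemma sum_mul_pow_ne_zero_of_ne_zero {K : ℕ} {a : Fin K → ℝ} (ha : a ≠ 0) :
    ∃ x ∈ Set.Ioo (0 : ℝ) 1, ∑ k, a k * x ^ (k : ℕ) ≠ 0 := by
  set p : ℝ[X] := ∑ k, C (a k) * X ^ (k : ℕ)
  have hp : p ≠ 0 := by
    obtain ⟨k, hk⟩ := Function.ne_iff.mp ha
    intro h
    have hcoeff : p.coeff k = a k := by
      simp [p, finsetSum_coeff, Fin.val_inj]
    exact hk (by simpa [h] using hcoeff.symm)
  obtain ⟨x, hx, hroot⟩ :=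
    ((Set.Ioo_infinite zero_lt_one).sdiff (Polynomial.finite_setOfPred_isRoot hp)).nonempty
  exact ⟨x, hx, by simpa [p, eval_finsetSum] using hroot⟩

lemma integral_sq_sum_mul_pow_pos {K : ℕ} {a : Fin K → ℝ} (ha : a ≠ 0) :
    0 < ∫ α in (0 : ℝ)..1, (∑ k, a k * α ^ (k : ℕ)) ^ 2 := by
  obtain ⟨x, hx, hne⟩ := sum_mul_pow_ne_zero_of_ne_zero ha
  exact intervalIntegral.integral_pos zero_lt_one (by fun_prop) (fun _ _ => sq_nonneg _)
    ⟨x, Set.Ioo_subset_Icc_self hx, by positivity⟩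

/-- The Gram matrix `(1 / (j + k + 1))` of the monomials in `L²(0, 1)` is positive definite. -/
theorem exists_pos_mul_sum_sq_le_integral_sq (K : ℕ) :
    ∃ c > 0, ∀ a : Fin K → ℝ,
      c * ∑ k, a k ^ 2 ≤ ∫ α in (0 : ℝ)..1, (∑ k, a k * α ^ (k : ℕ)) ^ 2 := by
  obtain ⟨c, hc, hle⟩ := exists_pos_mul_norm_sq_le
    (f := fun a : EuclideanSpace ℝ (Fin K) => ∫ α in (0 : ℝ)..1, (∑ k, a k * α ^ (k : ℕ)) ^ 2)
    (intervalIntegral.continuous_parametric_intervalIntegral_of_continuous' (by fun_prop) 0 1)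
    (fun a ha => integral_sq_sum_mul_pow_pos (by simpa using ha))
    (fun r a => by
      simp only [PiLp.smul_apply, smul_eq_mul, mul_assoc, ← mul_sum, mul_pow]
      exact intervalIntegral.integral_const_mul _ _)
  refine ⟨c, hc, fun a => ?_⟩
  simpa [EuclideanSpace.norm_sq_eq] using hle (WithLp.toLp 2 a)

theorem exists_pos_mul_sum_euclNorm_sq_le_integral (K n : ℕ) :
    ∃ c > 0, ∀ w : Fin K → Fin n → ℝ,
      c * ∑ k, euclNorm (w k) ^ 2 ≤
        ∫ α in (0 : ℝ)..1, euclNorm (∑ k : Fin K, α ^ (k : ℕ) • w k) ^ 2 := by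
  obtain ⟨c, hc, hle⟩ := exists_pos_mul_sum_sq_le_integral_sq K
  refine ⟨c, hc, fun w => ?_⟩
  simp only [euclNorm_sq, Finset.sum_apply, Pi.smul_apply, smul_eq_mul]
  rw [intervalIntegral.integral_finsetSum
    fun i _ => (by fun_prop : Continuous _).intervalIntegrable _ _, sum_comm, mul_sum]
  exact sum_le_sum fun i _ => by simpa only [mul_comm] using hle fun k => w k i

theorem mulVec_exp_smul_eq_sum {m n K : ℕ} (C : Matrix (Fin m) (Fin n) ℝ)
    {N : Matrix (Fin n) (Fin n) ℝ} (hN : N ^ K = 0) (s : ℝ) (ξ : Fin n → ℝ) :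
    (C * NormedSpace.exp (s • N)) *ᵥ ξ = ∑ k ∈ range K, (s ^ k / k !) • (C * N ^ k) *ᵥ ξ := by
  have hsN : (s • N) ^ K = 0 := by rw [smul_pow, hN, smul_zero]
  rw [NormedSpace.exp_eq_sum_range_of_pow_eq_zero (𝕂 := ℝ) hsN, Matrix.mul_sum, Matrix.sum_mulVec]
  refine sum_congr rfl fun k _ => ?_
  rw [smul_pow, smul_smul, Matrix.mul_smul, Matrix.smul_mulVec, div_eq_inv_mul]

theorem exists_pos_mul_sum_le_integral_euclNorm_mulVec_exp {m n K : ℕ}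
    (C : Matrix (Fin m) (Fin n) ℝ) {N : Matrix (Fin n) (Fin n) ℝ} (hN : N ^ K = 0) :
    ∃ c₀ > 0, ∀ (t : ℝ) (ξ : Fin n → ℝ),
      c₀ * ∑ k ∈ range K, t ^ (2 * k) * euclNorm ((C * N ^ k) *ᵥ ξ) ^ 2 ≤
        ∫ α in (0 : ℝ)..1, euclNorm ((C * NormedSpace.exp ((α * t) • N)) *ᵥ ξ) ^ 2 := by
  obtain ⟨c, hc, hle⟩ := exists_pos_mul_sum_euclNorm_sq_le_integral K m
  refine ⟨c / (K ! : ℝ) ^ 2, by positivity, fun t ξ => ?_⟩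
  set w : ℕ → Fin m → ℝ := fun k => (t ^ k / k !) • (C * N ^ k) *ᵥ ξ
  have hexp (α : ℝ) :
      (C * NormedSpace.exp ((α * t) • N)) *ᵥ ξ = ∑ k : Fin K, α ^ (k : ℕ) • w k := by
    rw [mulVec_exp_smul_eq_sum C hN, ← Fin.sum_univ_eq_sum_range]
    refine sum_congr rfl fun k _ => ?_
    rw [smul_smul, mul_pow, mul_div_assoc]
  have hw (k : ℕ) (hk : k ≤ K) :
      t ^ (2 * k) * euclNorm ((C * N ^ k) *ᵥ ξ) ^ 2 / (K ! : ℝ) ^ 2 ≤ euclNorm (w k) ^ 2 := by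
    rw [euclNorm_smul_sq, div_pow, pow_mul', div_mul_eq_mul_div]
    gcongr
  calc c / (K ! : ℝ) ^ 2 * ∑ k ∈ range K, t ^ (2 * k) * euclNorm ((C * N ^ k) *ᵥ ξ) ^ 2
      = c * ∑ k ∈ range K, t ^ (2 * k) * euclNorm ((C * N ^ k) *ᵥ ξ) ^ 2 / (K ! : ℝ) ^ 2 := by
        rw [← sum_div]; ring
    _ ≤ c * ∑ k : Fin K, euclNorm (w k) ^ 2 := by
        rw [Fin.sum_univ_eq_sum_range (fun k => euclNorm (w k) ^ 2)]
        gcongr with k hk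
        exact hw k (mem_range.mp hk).le
    _ ≤ ∫ α in (0 : ℝ)..1, euclNorm (∑ k : Fin K, α ^ (k : ℕ) • w k) ^ 2 := hle _
    _ = ∫ α in (0 : ℝ)..1, euclNorm ((C * NormedSpace.exp ((α * t) • N)) *ᵥ ξ) ^ 2 := by
        simp only [hexp]

theorem statement12_general (n : ℕ)
    (B Q : Matrix (Fin n) (Fin n) ℝ) (hQ : Q.PosSemidef)
    (K : ℕ) (hnil : B ^ K = 0) :
    ∃ c₀ : ℝ, 0 < c₀ ∧
      ∀ t : ℝ, 0 < t → ∀ ξ : Fin n → ℝ,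
        c₀ * ∑ k ∈ Finset.range K,
            t ^ (2 * k) * euclNorm ((((hQ.1.eigenvectorUnitary : Matrix (Fin n) (Fin n) ℝ) * diagonal (fun i => Real.sqrt (hQ.1.eigenvalues i)) * (star hQ.1.eigenvectorUnitary : Matrix (Fin n) (Fin n) ℝ)) * Bᵀ ^ k).mulVec ξ) ^ 2 ≤
          ∫ α in (0:ℝ)..1,
            euclNorm ((((hQ.1.eigenvectorUnitary : Matrix (Fin n) (Fin n) ℝ) * diagonal (fun i => Real.sqrt (hQ.1.eigenvalues i)) * (star hQ.1.eigenvectorUnitary : Matrix (Fin n) (Fin n) ℝ)) * NormedSpace.exp ((α * t) • Bᵀ)).mulVec ξ) ^ 2 := by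
  obtain ⟨c₀, hc₀, hle⟩ := exists_pos_mul_sum_le_integral_euclNorm_mulVec_exp
    ((hQ.1.eigenvectorUnitary : Matrix (Fin n) (Fin n) ℝ) *
      diagonal (fun i => Real.sqrt (hQ.1.eigenvalues i)) *
      (star hQ.1.eigenvectorUnitary : Matrix (Fin n) (Fin n) ℝ))
    (by rw [← transpose_pow, hnil, transpose_zero] : Bᵀ ^ K = 0)
  exact ⟨c₀, hc₀, fun t _ ξ => hle t ξ⟩

/-- When `B` is nilpotent of order `K ≥ 1`, there exists `c₀ > 0` such that for every
`t > 0` and `ξ`, `∫₀¹ |√Q e^{αtBᵀ} ξ|² dα ≥ c₀ Σ_{k=0}^{K−1} t^{2k} |√Q (Bᵀ)^k ξ|²`. -/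
theorem statement12 (n : ℕ) (hn : 1 ≤ n)
    (B Q : Matrix (Fin n) (Fin n) ℝ) (hQ : Q.PosSemidef)
    (K : ℕ) (hK : 1 ≤ K) (hnil : B ^ K = 0) (hne : B ^ (K - 1) ≠ 0) :
    ∃ c₀ : ℝ, 0 < c₀ ∧
      ∀ t : ℝ, 0 < t → ∀ ξ : Fin n → ℝ,
        c₀ * ∑ k ∈ Finset.range K,
            t ^ (2 * k) * euclNorm ((((hQ.1.eigenvectorUnitary : Matrix (Fin n) (Fin n) ℝ) * diagonal (fun i => Real.sqrt (hQ.1.eigenvalues i)) * (star hQ.1.eigenvectorUnitary : Matrix (Fin n) (Fin n) ℝ)) * Bᵀ ^ k).mulVec ξ) ^ 2 ≤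
          ∫ α in (0:ℝ)..1,
            euclNorm ((((hQ.1.eigenvectorUnitary : Matrix (Fin n) (Fin n) ℝ) * diagonal (fun i => Real.sqrt (hQ.1.eigenvalues i)) * (star hQ.1.eigenvectorUnitary : Matrix (Fin n) (Fin n) ℝ)) * NormedSpace.exp ((α * t) • Bᵀ)).mulVec ξ) ^ 2 :=
  statement12_general n B Q hQ K hnil
end
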